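/- arXiv:2601.19688 — 3 statements merged into one kernel-verified Lean document; each statement's English description precedes it below -/
import Mathlib

section
/- For events A₁,…,A_p, let X = ∑_{i=1}^p 1(A_i) and S_j = ∑_{1≤i₁<⋯<i_j≤p} P(A_{i₁} ∩ ⋯ ∩ A_{i_j}). Then for any integer k ∈ {1,…,p} and any integer 1 ≤ d ≤ ⌊(p−k)/2⌋, one has ∑_{j=k}^{2d+k+1} (−1)^{k+j} C(j−1, k−1) S_j ≤ P(X ≥ k) ≤ ∑_{j=k}^{2d+k} (−1)^{k+j} C(j−1, k−1) S_j. -/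
open Finset

lemma bon_choose_step (k m n : ℕ) (hk : 1 ≤ k) (hkm : k ≤ m) (hkn : k ≤ n) :
    ((n.choose m : ℝ)) * (m.choose (k-1))
      = (n.choose (k-1)) * ((n-k).choose (m-k) + (n-k).choose (m-k+1)) := by
  have pascal : ((n-k).choose (m-k) : ℝ) + (n-k).choose (m-k+1)
      = ((n-k+1).choose (m-k+1) : ℝ) := by
    rw [Nat.choose_succ_succ (n-k) (m-k)]; push_cast; ring
  rw [pascal]
  rcases le_or_gt m n with h | h
  · have h1 : k - 1 ≤ m := le_trans (Nat.sub_le k 1) hkm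
    have key := Nat.choose_mul (n := n) (hsk := h1)
    have e1 : n - (k-1) = n - k + 1 := by omega
    have e2 : m - (k-1) = m - k + 1 := by omega
    rw [e1, e2] at key
    exact_mod_cast congrArg (Nat.cast : ℕ → ℝ) key
  · have h1 : n.choose m = 0 := Nat.choose_eq_zero_of_lt h
    have h2 : (n-k+1).choose (m-k+1) = 0 := Nat.choose_eq_zero_of_lt (by omega)
    rw [h1, h2]; push_cast; ring

lemma bon_H (k n : ℕ) (hk : 1 ≤ k) (hkn : k ≤ n) :
    ∀ m, k ≤ m →
    ∑ j ∈ Finset.Icc k m, (-1:ℝ)^(k+j) * ((j-1).choose (k-1)) * (n.choose (j-1))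
      = (-1:ℝ)^(k+m) * (n.choose (k-1)) * ((n-k).choose (m-k)) := by
  intro m hm
  induction m, hm using Nat.le_induction with
  | base =>
      rw [Finset.Icc_self, Finset.sum_singleton, Nat.sub_self, Nat.choose_zero_right,
        Nat.choose_self]
      push_cast; ring
  | succ m hm ih =>
      rw [Finset.sum_Icc_succ_top (by omega : k ≤ m + 1), ih]
      have e1 : m + 1 - 1 = m := by omega
      have e2 : m + 1 - k = m - k + 1 := by omega
      rw [e1, e2]
      have key := bon_choose_step k m n hk hm hkn
      have sgn : (-1:ℝ)^(k+(m+1)) = -(-1:ℝ)^(k+m) := by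
        rw [show k+(m+1) = (k+m)+1 by ring, pow_succ]; ring
      rw [sgn]
      push_cast [Nat.choose_succ_succ (n-k) (m-k)] at key ⊢
      linear_combination (-(-1:ℝ)^(k+m)) * key

lemma bon_core (k m : ℕ) (hk : 1 ≤ k) (hkm : k ≤ m) (n : ℕ) :
    (if k ≤ n then (1:ℝ) else 0)
      - ∑ j ∈ Finset.Icc k m, (-1:ℝ)^(k+j) * ((j-1).choose (k-1)) * (n.choose j)
    = (-1:ℝ)^(m-k+1) *
        ∑ t ∈ Finset.Ico k n, ((t.choose (k-1) : ℝ) * ((t-k).choose (m-k))) := by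
  induction n with
  | zero =>
      rw [if_neg (by omega), Finset.Ico_eq_empty (by omega), Finset.sum_empty,
        mul_zero, zero_sub, neg_eq_zero]
      apply Finset.sum_eq_zero
      intro j hj
      rw [Finset.mem_Icc] at hj
      rw [show Nat.choose 0 j = 0 from Nat.choose_eq_zero_of_lt (by omega)]
      push_cast; ring
  | succ n ih =>
      have split : ∑ j ∈ Finset.Icc k m, (-1:ℝ)^(k+j) * ((j-1).choose (k-1)) * ((n+1).choose j)
          = (∑ j ∈ Finset.Icc k m, (-1:ℝ)^(k+j) * ((j-1).choose (k-1)) * (n.choose j))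
            + ∑ j ∈ Finset.Icc k m, (-1:ℝ)^(k+j) * ((j-1).choose (k-1)) * (n.choose (j-1)) := by
        rw [← Finset.sum_add_distrib]
        apply Finset.sum_congr rfl
        intro j hj
        rw [Finset.mem_Icc] at hj
        obtain ⟨j', rfl⟩ : ∃ j', j = j' + 1 := ⟨j - 1, by omega⟩
        rw [Nat.choose_succ_succ n j']
        simp only [Nat.add_sub_cancel]
        push_cast; ring
      rcases lt_trichotomy (n+1) k with h | h | h
      · have hH : ∑ j ∈ Finset.Icc k m, (-1:ℝ)^(k+j) * ((j-1).choose (k-1)) * (n.choose (j-1)) = 0 := by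
          apply Finset.sum_eq_zero
          intro j hj
          rw [Finset.mem_Icc] at hj
          rw [show n.choose (j-1) = 0 from Nat.choose_eq_zero_of_lt (by omega)]
          push_cast; ring
        rw [split, hH, if_neg (by omega),
          show Finset.Ico k (n+1) = Finset.Ico k n by
            rw [Finset.Ico_eq_empty (by omega), Finset.Ico_eq_empty (by omega)]]
        rw [if_neg (by omega)] at ih
        linarith [ih]
      · -- n + 1 = k
        have hH : ∑ j ∈ Finset.Icc k m, (-1:ℝ)^(k+j) * ((j-1).choose (k-1)) * (n.choose (j-1)) = 1 := by
          rw [Finset.sum_eq_single k]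
          · have hn : n = k - 1 := by omega
            have : (-1:ℝ)^(k+k) = 1 := Even.neg_one_pow ⟨k, rfl⟩
            rw [this, hn, Nat.choose_self]
            norm_num
          · intro j hj hjk
            rw [Finset.mem_Icc] at hj
            rw [show n.choose (j-1) = 0 from Nat.choose_eq_zero_of_lt (by omega)]
            push_cast; ring
          · intro habs
            exact absurd (Finset.mem_Icc.mpr ⟨le_refl k, hkm⟩) habs
        rw [split, hH, if_pos (by omega),
          show Finset.Ico k (n+1) = Finset.Ico k n by
            rw [Finset.Ico_eq_empty (by omega), Finset.Ico_eq_empty (by omega)]]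
        rw [if_neg (by omega)] at ih
        linarith [ih]
      · -- k ≤ n
        have hkn : k ≤ n := by omega
        have hH := bon_H k n hk hkn m hkm
        rw [split, hH, if_pos (by omega),
          Finset.sum_Ico_succ_top hkn, mul_add]
        rw [if_pos hkn] at ih
        have h2 : (-1:ℝ)^(k+m) = (-1:ℝ)^(m-k) := by
          rw [show k+m = (m-k)+2*k from by omega, pow_add, pow_mul, neg_one_sq, one_pow,
            mul_one]
        have sgn : (-1:ℝ)^(m-k+1) = -(-1:ℝ)^(k+m) := by
          rw [pow_succ, h2]; ring
        rw [sgn] at ih ⊢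
        linear_combination ih

/-- Bonferroni sign inequality, upper form (`m - k` even). -/
lemma bon_upper (k m : ℕ) (hk : 1 ≤ k) (hkm : k ≤ m) (heven : Even (m - k)) (n : ℕ) :
    (if k ≤ n then (1:ℝ) else 0)
      ≤ ∑ j ∈ Finset.Icc k m, (-1:ℝ)^(k+j) * ((j-1).choose (k-1)) * (n.choose j) := by
  have h := bon_core k m hk hkm n
  have hs : (-1:ℝ)^(m-k+1) = -1 := by
    rw [pow_succ, heven.neg_one_pow, one_mul]
  rw [hs] at h
  have hnn : (0:ℝ) ≤ ∑ t ∈ Finset.Ico k n, ((t.choose (k-1) : ℝ) * ((t-k).choose (m-k))) :=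
    Finset.sum_nonneg fun t _ => mul_nonneg (Nat.cast_nonneg _) (Nat.cast_nonneg _)
  linarith

/-- Bonferroni sign inequality, lower form (`m - k` odd). -/
lemma bon_lower (k m : ℕ) (hk : 1 ≤ k) (hkm : k ≤ m) (hodd : Odd (m - k)) (n : ℕ) :
    ∑ j ∈ Finset.Icc k m, (-1:ℝ)^(k+j) * ((j-1).choose (k-1)) * (n.choose j)
      ≤ (if k ≤ n then (1:ℝ) else 0) := by
  have h := bon_core k m hk hkm n
  have hs : (-1:ℝ)^(m-k+1) = 1 := by
    rw [pow_succ, hodd.neg_one_pow]; norm_num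
  rw [hs, one_mul] at h
  have hnn : (0:ℝ) ≤ ∑ t ∈ Finset.Ico k n, ((t.choose (k-1) : ℝ) * ((t-k).choose (m-k))) :=
    Finset.sum_nonneg fun t _ => mul_nonneg (Nat.cast_nonneg _) (Nat.cast_nonneg _)
  linarith

open MeasureTheory in
open Classical in
lemma bon_filt_measurable {Ω : Type*} [MeasurableSpace Ω] (p : ℕ) (A : Fin p → Set Ω)
    (hA : ∀ i, MeasurableSet (A i)) (F : Finset (Fin p)) :
    MeasurableSet {ω | Finset.univ.filter (fun i : Fin p => ω ∈ A i) = F} := by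
  have hset : {ω | Finset.univ.filter (fun i : Fin p => ω ∈ A i) = F}
      = ⋂ i, (if i ∈ F then A i else (A i)ᶜ) := by
    ext ω
    simp only [Set.mem_setOf_eq, Set.mem_iInter, Finset.ext_iff, Finset.mem_filter,
      Finset.mem_univ, true_and]
    constructor
    · intro h i
      by_cases hi : i ∈ F
      · rw [if_pos hi]; exact (h i).mpr hi
      · rw [if_neg hi]; exact fun hc => hi ((h i).mp hc)
    · intro h i
      have := h i
      by_cases hi : i ∈ F
      · rw [if_pos hi] at this; exact ⟨fun _ => hi, fun _ => this⟩
      · rw [if_neg hi] at this; exact ⟨fun hc => absurd hc this, fun hc => absurd hc hi⟩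
  rw [hset]
  exact MeasurableSet.iInter fun i => by
    by_cases hi : i ∈ F
    · rw [if_pos hi]; exact hA i
    · rw [if_neg hi]; exact (hA i).compl

open MeasureTheory in
open Classical in
lemma bon_measure_Q {Ω : Type*} [MeasurableSpace Ω] (μ : Measure Ω) [IsFiniteMeasure μ]
    (p : ℕ) (A : Fin p → Set Ω) (hA : ∀ i, MeasurableSet (A i))
    (Q : Finset (Fin p) → Prop) :
    (μ {ω | Q (Finset.univ.filter (fun i : Fin p => ω ∈ A i))}).toReal
      = ∑ F ∈ Finset.univ.filter Q,
          (μ {ω | Finset.univ.filter (fun i : Fin p => ω ∈ A i) = F}).toReal := by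
  have hset : {ω | Q (Finset.univ.filter (fun i : Fin p => ω ∈ A i))}
      = ⋃ F ∈ Finset.univ.filter Q,
          {ω | Finset.univ.filter (fun i : Fin p => ω ∈ A i) = F} := by
    ext ω
    simp only [Set.mem_setOf_eq, Set.mem_iUnion, Finset.mem_filter, Finset.mem_univ, true_and]
    constructor
    · intro h; exact ⟨_, h, rfl⟩
    · rintro ⟨F, hF, h⟩; rw [h]; exact hF
  rw [hset, measure_biUnion_finset ?_ (fun F _ => bon_filt_measurable p A hA F)]
  · exact ENNReal.toReal_sum fun F _ => measure_ne_top μ _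
  · intro F _ G _ hFG
    apply Set.disjoint_left.mpr
    intro ω h1 h2
    exact hFG (h1 ▸ h2 ▸ rfl)



open MeasureTheory Classical in

/-- **Bonferroni inequalities.** For events `A₁,…,A_p`, with
`X = ∑ᵢ 1(Aᵢ)` and `S_j = ∑_{i₁<⋯<i_j} P(A_{i₁} ∩ ⋯ ∩ A_{i_j})`, for any `1 ≤ k ≤ p` and
any `1 ≤ d ≤ ⌊(p−k)/2⌋`,
`∑_{j=k}^{2d+k+1} (−1)^{k+j} C(j−1,k−1) S_j ≤ P(X ≥ k) ≤ ∑_{j=k}^{2d+k} (−1)^{k+j} C(j−1,k−1) S_j`. -/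
theorem bonferroni_inequalities
    {Ω : Type*} [MeasurableSpace Ω] (μ : Measure Ω) [IsProbabilityMeasure μ]
    (p : ℕ) (A : Fin p → Set Ω) (hA : ∀ i, MeasurableSet (A i))
    (S : ℕ → ℝ)
    (hS : ∀ j, S j = ∑ T ∈ Finset.powersetCard j (Finset.univ : Finset (Fin p)),
        (μ (⋂ i ∈ T, A i)).toReal)
    (k d : ℕ) (hk1 : 1 ≤ k) (hkp : k ≤ p) (hd1 : 1 ≤ d) (hd : d ≤ (p - k) / 2) :
    (∑ j ∈ Finset.Icc k (2 * d + k + 1), (-1 : ℝ) ^ (k + j) * (j - 1).choose (k - 1) * S j)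
      ≤ (μ {ω | (k : ℕ) ≤ (Finset.univ.filter (fun i : Fin p => ω ∈ A i)).card}).toReal ∧
    (μ {ω | (k : ℕ) ≤ (Finset.univ.filter (fun i : Fin p => ω ∈ A i)).card}).toReal
      ≤ ∑ j ∈ Finset.Icc k (2 * d + k), (-1 : ℝ) ^ (k + j) * (j - 1).choose (k - 1) * S j := by
  set e : Finset (Fin p) → ℝ :=
    fun F => (μ {ω | Finset.univ.filter (fun i : Fin p => ω ∈ A i) = F}).toReal with he
  have he_nonneg : ∀ F, 0 ≤ e F := fun F => ENNReal.toReal_nonneg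
  -- the probability as a sum over atoms
  have hP : (μ {ω | (k : ℕ) ≤ (Finset.univ.filter (fun i : Fin p => ω ∈ A i)).card}).toReal
      = ∑ F : Finset (Fin p), (if k ≤ F.card then e F else 0) := by
    rw [Finset.sum_ite, Finset.sum_const, smul_zero, add_zero]
    refine (Finset.sum_congr ?_ fun _ _ => rfl).trans
      (bon_measure_Q μ p A hA (fun F => k ≤ F.card)).symm |>.symm
    ext F
    simp
  -- S j as a sum over atoms
  have hSj : ∀ j, S j = ∑ F : Finset (Fin p), (F.card.choose j : ℝ) * e F := by
    intro j
    rw [hS]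
    have h1 : ∀ T ∈ Finset.powersetCard j (Finset.univ : Finset (Fin p)),
        (μ (⋂ i ∈ T, A i)).toReal = ∑ F : Finset (Fin p), (if T ⊆ F then e F else 0) := by
      intro T _
      have hTset : (⋂ i ∈ T, A i)
          = {ω | T ⊆ Finset.univ.filter (fun i : Fin p => ω ∈ A i)} := by
        ext ω
        simp only [Set.mem_iInter, Set.mem_setOf_eq, Finset.subset_iff, Finset.mem_filter,
          Finset.mem_univ, true_and]
      rw [hTset, bon_measure_Q μ p A hA (fun F => T ⊆ F), Finset.sum_filter]
      exact Finset.sum_congr rfl fun F _ => by split <;> rfl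
    rw [Finset.sum_congr rfl h1, Finset.sum_comm]
    apply Finset.sum_congr rfl
    intro F _
    rw [← Finset.sum_filter, Finset.sum_const, nsmul_eq_mul]
    congr 2
    rw [show Finset.filter (fun T => T ⊆ F)
          (Finset.powersetCard j (Finset.univ : Finset (Fin p)))
        = Finset.powersetCard j F from by
      ext T
      simp only [Finset.mem_filter, Finset.mem_powersetCard, Finset.subset_univ, true_and]
      tauto]
    exact Finset.card_powersetCard j F
  -- swap sums
  have hswap : ∀ m', ∑ j ∈ Finset.Icc k m', (-1 : ℝ) ^ (k + j) * (j - 1).choose (k - 1) * S j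
      = ∑ F : Finset (Fin p),
          (∑ j ∈ Finset.Icc k m',
            (-1:ℝ)^(k+j) * ((j-1).choose (k-1)) * (F.card.choose j)) * e F := by
    intro m'
    simp_rw [hSj, Finset.mul_sum]
    rw [Finset.sum_comm]
    apply Finset.sum_congr rfl
    intro F _
    rw [Finset.sum_mul]
    apply Finset.sum_congr rfl
    intro j _
    ring
  constructor
  · rw [hswap, hP]
    apply Finset.sum_le_sum
    intro F _
    have hb := bon_lower k (2*d+k+1) hk1 (by omega) ⟨d, by omega⟩ F.card
    calc (∑ j ∈ Finset.Icc k (2*d+k+1),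
            (-1:ℝ)^(k+j) * ((j-1).choose (k-1)) * (F.card.choose j)) * e F
        ≤ (if k ≤ F.card then (1:ℝ) else 0) * e F :=
          mul_le_mul_of_nonneg_right hb (he_nonneg F)
      _ = (if k ≤ F.card then e F else 0) := by split <;> simp
  · rw [hswap, hP]
    apply Finset.sum_le_sum
    intro F _
    have hb := bon_upper k (2*d+k) hk1 (by omega) ⟨d, by omega⟩ F.card
    calc (if k ≤ F.card then e F else 0)
        = (if k ≤ F.card then (1:ℝ) else 0) * e F := by split <;> simp
      _ ≤ (∑ j ∈ Finset.Icc k (2*d+k),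
            (-1:ℝ)^(k+j) * ((j-1).choose (k-1)) * (F.card.choose j)) * e F :=
          mul_le_mul_of_nonneg_right hb (he_nonneg F)
end

section
/- Let ξ be a random variable with E[ξ] = a ≠ 0 and let τ ≥ 2. Then E[|ξ² − E[ξ²]|^τ] ≤ 16^τ · [|a|^{−τ}(Var ξ)^τ + √(E[|ξ−a|^{2τ}])] · [|a|^τ + |a|^{−τ}(Var ξ)^τ + √(E[|ξ−a|^{2τ}])]. -/
open MeasureTheory

private lemma two_term_rpow (x y : ℝ) (hx : 0 ≤ x) (hy : 0 ≤ y) {p : ℝ} (hp : 1 ≤ p) :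
    (x + y) ^ p ≤ 2 ^ p * (x ^ p + y ^ p) := by
  have hp0 : 0 ≤ p := by linarith
  have hm : x + y ≤ 2 * max x y := by
    rcases le_total x y with h | h
    · have := le_max_right x y; have := le_max_left x y; linarith
    · have := le_max_right x y; have := le_max_left x y; linarith
  have h0 : (0 : ℝ) ≤ max x y := le_trans hx (le_max_left _ _)
  calc (x + y) ^ p ≤ (2 * max x y) ^ p :=
        Real.rpow_le_rpow (by linarith) hm hp0
    _ = 2 ^ p * (max x y) ^ p := Real.mul_rpow (by norm_num) h0
    _ ≤ 2 ^ p * (x ^ p + y ^ p) := by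
        have h2p : (0:ℝ) ≤ 2 ^ p := Real.rpow_nonneg (by norm_num) p
        have : (max x y) ^ p ≤ x ^ p + y ^ p := by
          rcases max_cases x y with ⟨hme, _⟩ | ⟨hme, _⟩ <;> rw [hme]
          · nlinarith [Real.rpow_nonneg hy p]
          · nlinarith [Real.rpow_nonneg hx p]
        nlinarith

private lemma rpow_le_one_add (x : ℝ) (hx : 0 ≤ x) {p q : ℝ} (hp : 0 ≤ p) (hpq : p ≤ q) :
    x ^ p ≤ 1 + x ^ q := by
  rcases le_or_gt x 1 with h | h
  · have : x ^ p ≤ 1 := Real.rpow_le_one hx h hp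
    have : 0 ≤ x ^ q := Real.rpow_nonneg hx q
    linarith
  · have h1 : x ^ p ≤ x ^ q := Real.rpow_le_rpow_of_exponent_le h.le hpq
    linarith

set_option maxHeartbeats 1600000 in
/-- For a real random variable `ξ` with mean `a ≠ 0`, finite `2τ`-th
moment and variance `Var ξ = E[(ξ−a)²]`, one has
`E[|ξ² − E[ξ²]|^τ] ≤ 16^τ · (|a|^{−τ}(Var ξ)^τ + √(E[|ξ−a|^{2τ}]))
  · (|a|^τ + |a|^{−τ}(Var ξ)^τ + √(E[|ξ−a|^{2τ}]))`. -/
theorem centered_square_moment_bound_nonzero_mean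
    {Ω : Type*} [MeasurableSpace Ω] (μ : Measure Ω) [IsProbabilityMeasure μ]
    (ξ : Ω → ℝ) (hmeas : Measurable ξ)
    (τ : ℝ) (hτ : 2 ≤ τ)
    (a : ℝ) (ha : a ≠ 0)
    (hint : Integrable ξ μ)
    (hmean : ∫ ω, ξ ω ∂μ = a)
    (hmom : Integrable (fun ω => |ξ ω - a| ^ (2 * τ)) μ) :
    ∫ ω, |ξ ω ^ 2 - ∫ ω', ξ ω' ^ 2 ∂μ| ^ τ ∂μ ≤
      16 ^ τ *
        (|a| ^ (-τ) * (∫ ω, (ξ ω - a) ^ 2 ∂μ) ^ τ +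
          Real.sqrt (∫ ω, |ξ ω - a| ^ (2 * τ) ∂μ)) *
        (|a| ^ τ + |a| ^ (-τ) * (∫ ω, (ξ ω - a) ^ 2 ∂μ) ^ τ +
          Real.sqrt (∫ ω, |ξ ω - a| ^ (2 * τ) ∂μ)) := by
  have hτ0 : (0:ℝ) ≤ τ := by linarith
  have hτ1 : (1:ℝ) ≤ τ := by linarith
  set η : Ω → ℝ := fun ω => ξ ω - a with hη
  have hηm : Measurable η := hmeas.sub measurable_const
  have hη_int : Integrable η μ := hint.sub (integrable_const a)
  have hη_mean : ∫ ω, η ω ∂μ = 0 := by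
    simp [hη, integral_sub hint (integrable_const a), hmean]
  -- measurability of rpow with nonneg exponent
  have hrpow_cont : ∀ p : ℝ, 0 ≤ p → Continuous (fun x : ℝ => x ^ p) := fun p hp =>
    continuous_id.rpow_const (fun x => Or.inr hp)
  have hmp : ∀ p : ℝ, 0 ≤ p → Measurable (fun ω => |η ω| ^ p) := fun p hp =>
    ((hrpow_cont p hp).measurable).comp hηm.abs
  -- integrability of |η|^p for p ≤ 2τ
  have hip : ∀ p : ℝ, 0 ≤ p → p ≤ 2 * τ → Integrable (fun ω => |η ω| ^ p) μ := by
    intro p hp hp2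
    refine Integrable.mono' ((integrable_const (1:ℝ)).add hmom) ((hmp p hp).aestronglyMeasurable) ?_
    filter_upwards with ω
    rw [Real.norm_of_nonneg (Real.rpow_nonneg (abs_nonneg _) p)]
    exact rpow_le_one_add _ (abs_nonneg _) hp hp2
  have hiτ : Integrable (fun ω => |η ω| ^ τ) μ := hip τ hτ0 (by linarith)
  have h2eq : (fun ω => η ω ^ 2) = fun ω => |η ω| ^ (2:ℝ) := by
    funext ω
    rw [show ((2:ℝ)) = ((2:ℕ):ℝ) by norm_num, Real.rpow_natCast, sq_abs]
  have hi2 : Integrable (fun ω => η ω ^ 2) μ := by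
    rw [h2eq]; exact hip 2 (by norm_num) (by linarith)
  set V : ℝ := ∫ ω, η ω ^ 2 ∂μ with hV
  set M : ℝ := ∫ ω, |η ω| ^ (2*τ) ∂μ with hM
  have hV0 : 0 ≤ V := integral_nonneg fun ω => sq_nonneg _
  have hM0 : 0 ≤ M := integral_nonneg fun ω => Real.rpow_nonneg (abs_nonneg _) _
  -- ξ ω ^ 2 = η ω ^ 2 + 2 * a * η ω + a ^ 2
  have hsq : ∀ ω, ξ ω ^ 2 = η ω ^ 2 + (2*a) * η ω + a ^ 2 := by
    intro ω; simp only [hη]; ring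
  have hξ2_int : Integrable (fun ω => ξ ω ^ 2) μ := by
    have : Integrable (fun ω => η ω ^ 2 + (2*a) * η ω + a ^ 2) μ :=
      (hi2.add (hη_int.const_mul (2*a))).add (integrable_const _)
    exact this.congr (by filter_upwards with ω using (hsq ω).symm)
  have hEξ2 : ∫ ω, ξ ω ^ 2 ∂μ = V + a ^ 2 := by
    calc ∫ ω, ξ ω ^ 2 ∂μ = ∫ ω, (η ω ^ 2 + (2*a) * η ω + a ^ 2) ∂μ := by
          exact integral_congr_ae (by filter_upwards with ω using hsq ω)
      _ = V + a ^ 2 := by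
          have hi2' : Integrable (fun ω => η ω ^ 2 + (2*a) * η ω) μ :=
            hi2.add (hη_int.const_mul (2*a))
          rw [integral_add hi2' (integrable_const _),
            integral_add hi2 (hη_int.const_mul (2*a)), integral_const_mul, hη_mean]
          simp [hV]
  -- pointwise bound
  set B : Ω → ℝ := fun ω => 4 ^ τ * (|η ω| ^ (2*τ) + (2*|a|) ^ τ * |η ω| ^ τ + V ^ τ) with hB
  have hBint : Integrable B μ :=
    (((hmom.add ((hiτ.const_mul _))).add (integrable_const _)).const_mul _)
  have hpt : ∀ ω, |ξ ω ^ 2 - ∫ ω', ξ ω' ^ 2 ∂μ| ^ τ ≤ B ω := by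
    intro ω
    have hdecomp : ξ ω ^ 2 - ∫ ω', ξ ω' ^ 2 ∂μ = η ω ^ 2 + (2*a) * η ω + (-V) := by
      rw [hEξ2, hsq ω]; ring
    rw [hdecomp]
    have habs : |η ω ^ 2 + (2*a) * η ω + (-V)| ≤ |η ω ^ 2| + |(2*a) * η ω| + |(-V)| :=
      (abs_add_le _ _).trans (by gcongr; exact abs_add_le _ _)
    have h1 : |η ω ^ 2 + (2*a) * η ω + (-V)| ^ τ
        ≤ (|η ω ^ 2| + |(2*a) * η ω| + |(-V)|) ^ τ :=
      Real.rpow_le_rpow (abs_nonneg _) habs hτ0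
    refine h1.trans ?_
    have h2 : (|η ω ^ 2| + |(2*a) * η ω| + |(-V)|) ^ τ
        ≤ 2 ^ τ * (|η ω ^ 2| ^ τ + (|(2*a) * η ω| + |(-V)|) ^ τ) := by
      rw [add_assoc]
      exact two_term_rpow _ _ (abs_nonneg _) (by positivity) hτ1
    have h3 : (|(2*a) * η ω| + |(-V)|) ^ τ ≤ 2 ^ τ * (|(2*a) * η ω| ^ τ + |(-V)| ^ τ) :=
      two_term_rpow _ _ (abs_nonneg _) (abs_nonneg _) hτ1
    have key : |η ω ^ 2| ^ τ = |η ω| ^ (2*τ) := by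
      rw [abs_pow, ← Real.rpow_natCast (|η ω|) 2, ← Real.rpow_mul (abs_nonneg _)]
      norm_num
    have key2 : |(2*a) * η ω| ^ τ = (2*|a|) ^ τ * |η ω| ^ τ := by
      rw [abs_mul, Real.mul_rpow (abs_nonneg _) (abs_nonneg _), abs_mul]
      norm_num
    have key3 : |(-V)| ^ τ = V ^ τ := by rw [abs_neg, abs_of_nonneg hV0]
    have h2pos : (0:ℝ) < 2 ^ τ := Real.rpow_pos_of_pos (by norm_num) τ
    have h4 : (2:ℝ) ^ τ * 2 ^ τ = 4 ^ τ := by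
      rw [← Real.mul_rpow (by norm_num) (by norm_num)]; norm_num
    have h2τ : (2:ℝ) ^ τ ≤ 4 ^ τ := Real.rpow_le_rpow (by norm_num) (by norm_num) hτ0
    have hterm1 : 0 ≤ |η ω ^ 2| ^ τ := Real.rpow_nonneg (abs_nonneg _) _
    simp only [hB]
    rw [← key, ← key2, ← key3]
    nlinarith [Real.rpow_nonneg (abs_nonneg ((2*a) * η ω)) τ, Real.rpow_nonneg (abs_nonneg (-V)) τ]
  -- integrability of LHS and monotonicity
  have hLm : Measurable (fun ω => |ξ ω ^ 2 - ∫ ω', ξ ω' ^ 2 ∂μ| ^ τ) :=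
    ((hrpow_cont τ hτ0).measurable).comp ((hmeas.pow_const 2).sub measurable_const).abs
  have hLint : Integrable (fun ω => |ξ ω ^ 2 - ∫ ω', ξ ω' ^ 2 ∂μ| ^ τ) μ := by
    refine Integrable.mono' hBint hLm.aestronglyMeasurable ?_
    filter_upwards with ω
    rw [Real.norm_of_nonneg (Real.rpow_nonneg (abs_nonneg _) _)]
    exact hpt ω
  have hstep1 : ∫ ω, |ξ ω ^ 2 - ∫ ω', ξ ω' ^ 2 ∂μ| ^ τ ∂μ ≤ ∫ ω, B ω ∂μ :=
    integral_mono hLint hBint hpt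
  have hIB : ∫ ω, B ω ∂μ = 4 ^ τ * (M + (2*|a|) ^ τ * (∫ ω, |η ω| ^ τ ∂μ) + V ^ τ) := by
    simp only [hB]
    have hi1 : Integrable (fun ω => |η ω| ^ (2*τ) + (2*|a|) ^ τ * |η ω| ^ τ) μ :=
      hmom.add (hiτ.const_mul _)
    rw [integral_const_mul, integral_add hi1 (integrable_const _),
      integral_add hmom (hiτ.const_mul _), integral_const_mul, integral_const]
    simp [hM]
    exact Or.inl rfl
  -- Cauchy-Schwarz: ∫ |η|^τ ≤ √M
  have hCS : ∫ ω, |η ω| ^ τ ∂μ ≤ Real.sqrt M := by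
    have hpq : Real.HolderConjugate 2 2 := (Real.holderConjugate_iff_eq_conjExponent (by norm_num)).2 (by norm_num)
    have hf2 : MemLp (fun ω => |η ω| ^ τ) (ENNReal.ofReal 2) μ := by
      rw [show ENNReal.ofReal 2 = 2 by simp [ENNReal.ofReal_ofNat]]
      refine (memLp_two_iff_integrable_sq (hmp τ hτ0).aestronglyMeasurable).2 ?_
      refine hmom.congr ?_
      filter_upwards with ω
      rw [← Real.rpow_natCast (|η ω| ^ τ) 2, ← Real.rpow_mul (abs_nonneg _)]
      norm_num [mul_comm]
      rfl
    have hg : MemLp (fun _ : Ω => (1:ℝ)) (ENNReal.ofReal 2) μ := memLp_const 1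
    have h := integral_mul_le_Lp_mul_Lq_of_nonneg hpq
      (f := fun ω => |η ω| ^ τ) (g := fun _ => (1:ℝ))
      (Filter.Eventually.of_forall fun ω => Real.rpow_nonneg (abs_nonneg _) _)
      (Filter.Eventually.of_forall fun _ => zero_le_one) hf2 hg
    simp only [mul_one, Real.one_rpow, integral_const, measure_univ, probReal_univ, ENNReal.toReal_one,
      smul_eq_mul, one_mul] at h
    refine h.trans ?_
    have heq : ∫ ω, (|η ω| ^ τ) ^ (2:ℝ) ∂μ = M := by
      rw [hM]
      refine integral_congr_ae ?_
      filter_upwards with ω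
      rw [← Real.rpow_mul (abs_nonneg _)]
      norm_num [mul_comm]
    rw [heq, Real.sqrt_eq_rpow]
  -- final arithmetic
  refine hstep1.trans ?_
  rw [hIB]
  set S : ℝ := Real.sqrt M with hS
  have hS0 : 0 ≤ S := Real.sqrt_nonneg _
  have hSS : S * S = M := Real.mul_self_sqrt hM0
  have hEτ0 : 0 ≤ ∫ ω, |η ω| ^ τ ∂μ :=
    integral_nonneg fun ω => Real.rpow_nonneg (abs_nonneg _) _
  set A : ℝ := |a| ^ (-τ) * V ^ τ with hA
  have haτ : (0:ℝ) < |a| ^ τ := Real.rpow_pos_of_pos (abs_pos.2 ha) τ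
  have hA0 : 0 ≤ A := by
    have : (0:ℝ) ≤ |a| ^ (-τ) := Real.rpow_nonneg (abs_nonneg _) _
    have : (0:ℝ) ≤ V ^ τ := Real.rpow_nonneg hV0 _
    positivity
  have hAa : A * |a| ^ τ = V ^ τ := by
    rw [hA, mul_assoc, mul_comm (V ^ τ), ← mul_assoc, ← Real.rpow_add (abs_pos.2 ha)]
    simp
  have h2a : (2*|a|) ^ τ = 2 ^ τ * |a| ^ τ := Real.mul_rpow (by norm_num) (abs_nonneg _)
  have h4_16 : (4:ℝ) ^ τ ≤ 16 ^ τ := Real.rpow_le_rpow (by norm_num) (by norm_num) hτ0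
  have h8 : (4:ℝ) ^ τ * 2 ^ τ = 8 ^ τ := by
    rw [← Real.mul_rpow (by norm_num) (by norm_num)]; norm_num
  have h8_16 : (8:ℝ) ^ τ ≤ 16 ^ τ := Real.rpow_le_rpow (by norm_num) (by norm_num) hτ0
  have hVτ0 : 0 ≤ V ^ τ := Real.rpow_nonneg hV0 _
  have hCS' : ∫ ω, |η ω| ^ τ ∂μ ≤ S := hCS
  -- goal: 4^τ*(M + (2|a|)^τ*Eτ + V^τ) ≤ 16^τ * (A + S) * (|a|^τ + A + S)
  have expand : 16 ^ τ * (A + S) * (|a| ^ τ + A + S)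
      = 16 ^ τ * (A * |a| ^ τ + A * A + A * S + S * |a| ^ τ + S * A + S * S) := by ring
  rw [expand, hAa, hSS]
  set I : ℝ := ∫ ω, |η ω| ^ τ ∂μ with hI
  have h16pos : (0:ℝ) ≤ 16 ^ τ := (Real.rpow_pos_of_pos (by norm_num) τ).le
  have hb1 : 4 ^ τ * M ≤ 16 ^ τ * M := mul_le_mul_of_nonneg_right h4_16 hM0
  have hb2 : 8 ^ τ * (|a| ^ τ * I) ≤ 16 ^ τ * (|a| ^ τ * S) :=
    mul_le_mul h8_16 (mul_le_mul_of_nonneg_left hCS' haτ.le)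
      (mul_nonneg haτ.le hEτ0) h16pos
  have hb3 : 4 ^ τ * V ^ τ ≤ 16 ^ τ * V ^ τ := mul_le_mul_of_nonneg_right h4_16 hVτ0
  have hrest : 0 ≤ 16 ^ τ * (A * A + A * S + S * A) := by positivity
  calc 4 ^ τ * (M + (2 * |a|) ^ τ * I + V ^ τ)
      = 4 ^ τ * M + 8 ^ τ * (|a| ^ τ * I) + 4 ^ τ * V ^ τ := by rw [h2a, ← h8]; ring
    _ ≤ 16 ^ τ * M + 16 ^ τ * (|a| ^ τ * S) + 16 ^ τ * V ^ τ := by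
        linarith [hb1, hb2, hb3]
    _ ≤ 16 ^ τ * (V ^ τ + A * A + A * S + S * |a| ^ τ + S * A + M) := by nlinarith [hrest]
end

section
/- For fixed a > 0 and x > 0, the rescaled Beta CDF converges to the chi-squared CDF: F_{Beta(a,(n−2)/2)}(x/n) → F_{Gamma(a,scale 2)}(x) = F_{χ²_{2a}}(x) as n → ∞ (when 2a is interpreted as the degrees of freedom). -/
open MeasureTheory ProbabilityTheory

section AuxGamma

open Filter Set

private lemma aux_ratio_le {a x : ℝ} (ha : 0 < a) (ha1 : a ≤ 1) (hx : 0 < x) :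
    Real.Gamma (x + a) ≤ Real.Gamma x * x ^ a := by
  have hΓx : 0 < Real.Gamma x := Real.Gamma_pos_of_pos hx
  have hΓxa : 0 < Real.Gamma (x + a) := Real.Gamma_pos_of_pos (by linarith)
  have hconv := Real.convexOn_log_Gamma.2 (Set.mem_Ioi.mpr hx)
    (Set.mem_Ioi.mpr (by linarith : (0:ℝ) < x + 1)) (by linarith : (0:ℝ) ≤ 1 - a) ha.le (by ring)
  simp only [smul_eq_mul, Function.comp_apply] at hconv
  have hcomb : (1 - a) * x + a * (x + 1) = x + a := by ring
  rw [hcomb] at hconv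
  calc Real.Gamma (x + a) = Real.exp (Real.log (Real.Gamma (x + a))) := (Real.exp_log hΓxa).symm
    _ ≤ Real.exp ((1 - a) * Real.log (Real.Gamma x) + a * Real.log (Real.Gamma (x + 1))) :=
        Real.exp_le_exp.mpr hconv
    _ = Real.Gamma x ^ (1 - a) * Real.Gamma (x + 1) ^ a := by
        rw [Real.exp_add, Real.rpow_def_of_pos hΓx,
          Real.rpow_def_of_pos (Real.Gamma_pos_of_pos (by linarith)), mul_comm (Real.log _),
          mul_comm (Real.log _)]
    _ = Real.Gamma x * x ^ a := by
        rw [Real.Gamma_add_one hx.ne', Real.mul_rpow hx.le hΓx.le,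
          show Real.Gamma x ^ (1 - a) * (x ^ a * Real.Gamma x ^ a)
            = Real.Gamma x ^ (1 - a) * Real.Gamma x ^ a * x ^ a from by ring,
          ← Real.rpow_add hΓx]
        norm_num

private lemma aux_ratio_ge {a x : ℝ} (ha : 0 < a) (ha1 : a ≤ 1) (hx : 0 < x) :
    Real.Gamma x * x ^ a * (x / (x + a)) ^ (1 - a) ≤ Real.Gamma (x + a) := by
  have hΓx : 0 < Real.Gamma x := Real.Gamma_pos_of_pos hx
  have hxa : (0:ℝ) < x + a := by linarith
  have hΓxa : 0 < Real.Gamma (x + a) := Real.Gamma_pos_of_pos hxa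
  have hconv := Real.convexOn_log_Gamma.2 (Set.mem_Ioi.mpr hxa)
    (Set.mem_Ioi.mpr (by linarith : (0:ℝ) < x + a + 1)) ha.le (by linarith : (0:ℝ) ≤ 1 - a)
    (by ring)
  simp only [smul_eq_mul, Function.comp_apply] at hconv
  have hcomb : a * (x + a) + (1 - a) * (x + a + 1) = x + 1 := by ring
  rw [hcomb] at hconv
  have key : x * Real.Gamma x ≤ Real.Gamma (x + a) * (x + a) ^ (1 - a) := by
    calc x * Real.Gamma x = Real.Gamma (x + 1) := (Real.Gamma_add_one hx.ne').symm
      _ = Real.exp (Real.log (Real.Gamma (x + 1))) :=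
          (Real.exp_log (Real.Gamma_pos_of_pos (by linarith))).symm
      _ ≤ Real.exp (a * Real.log (Real.Gamma (x + a))
            + (1 - a) * Real.log (Real.Gamma (x + a + 1))) := Real.exp_le_exp.mpr hconv
      _ = Real.Gamma (x + a) ^ a * Real.Gamma (x + a + 1) ^ (1 - a) := by
          rw [Real.exp_add, Real.rpow_def_of_pos hΓxa,
            Real.rpow_def_of_pos (Real.Gamma_pos_of_pos (by linarith)), mul_comm (Real.log _),
            mul_comm (Real.log _)]
      _ = Real.Gamma (x + a) * (x + a) ^ (1 - a) := by
          rw [Real.Gamma_add_one hxa.ne', Real.mul_rpow hxa.le hΓxa.le,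
            show Real.Gamma (x + a) ^ a * ((x + a) ^ (1 - a) * Real.Gamma (x + a) ^ (1 - a))
              = Real.Gamma (x + a) ^ a * Real.Gamma (x + a) ^ (1 - a) * (x + a) ^ (1 - a)
              from by ring, ← Real.rpow_add hΓxa]
          norm_num
  have hpow : (0:ℝ) < (x + a) ^ (1 - a) := Real.rpow_pos_of_pos hxa _
  rw [Real.div_rpow hx.le hxa.le]
  rw [show Real.Gamma x * x ^ a * (x ^ (1 - a) / (x + a) ^ (1 - a))
      = Real.Gamma x * (x ^ a * x ^ (1 - a)) / (x + a) ^ (1 - a) from by ring,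
    ← Real.rpow_add hx]
  norm_num
  rw [div_le_iff₀ hpow]
  linarith [key]

private lemma tendsto_gamma_ratio_base {a : ℝ} (ha : 0 < a) (ha1 : a ≤ 1) :
    Tendsto (fun x : ℝ => Real.Gamma (x + a) / (Real.Gamma x * x ^ a)) atTop (nhds 1) := by
  have hlow : Tendsto (fun x : ℝ => (x / (x + a)) ^ (1 - a)) atTop (nhds 1) := by
    have h0 : Tendsto (fun x : ℝ => x / (x + a)) atTop (nhds 1) := by
      have h1 : Tendsto (fun x : ℝ => 1 - a / (x + a)) atTop (nhds 1) := by
        have := Tendsto.div_atTop (tendsto_const_nhds (x := a))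
          (tendsto_atTop_add_const_right atTop a tendsto_id)
        simpa using (tendsto_const_nhds (x := (1:ℝ))).sub this
      refine h1.congr' ?_
      filter_upwards [eventually_gt_atTop (max 0 (-a))] with x hx
      have hxa : x + a ≠ 0 := by
        intro h; nlinarith [lt_of_le_of_lt (le_max_left 0 (-a)) hx,
          lt_of_le_of_lt (le_max_right 0 (-a)) hx]
      field_simp
      ring
    have hc : Tendsto (fun y : ℝ => y ^ (1 - a)) (nhds 1) (nhds 1) := by
      have := (Real.continuousAt_rpow_const 1 (1 - a) (Or.inl one_ne_zero)).tendsto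
      simpa using this
    exact hc.comp h0
  refine tendsto_of_tendsto_of_tendsto_of_le_of_le' hlow tendsto_const_nhds ?_ ?_
  · filter_upwards [eventually_gt_atTop (0:ℝ)] with x hx
    have hΓx : 0 < Real.Gamma x := Real.Gamma_pos_of_pos hx
    have hpos : 0 < Real.Gamma x * x ^ a := by positivity
    rw [le_div_iff₀ hpos]
    calc (x / (x + a)) ^ (1 - a) * (Real.Gamma x * x ^ a)
        = Real.Gamma x * x ^ a * (x / (x + a)) ^ (1 - a) := by ring
      _ ≤ Real.Gamma (x + a) := aux_ratio_ge ha ha1 hx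
  · filter_upwards [eventually_gt_atTop (0:ℝ)] with x hx
    have hΓx : 0 < Real.Gamma x := Real.Gamma_pos_of_pos hx
    have hpos : 0 < Real.Gamma x * x ^ a := by positivity
    rw [div_le_one hpos]
    exact aux_ratio_le ha ha1 hx

private lemma tendsto_gamma_ratio_aux : ∀ n : ℕ, ∀ a : ℝ, 0 < a → a ≤ n + 1 →
    Tendsto (fun x : ℝ => Real.Gamma (x + a) / (Real.Gamma x * x ^ a)) atTop (nhds 1) := by
  intro n
  induction n with
  | zero => intro a ha han; exact tendsto_gamma_ratio_base ha (by simpa using han)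
  | succ n ih =>
    intro a ha han
    by_cases h1 : a ≤ 1
    · exact tendsto_gamma_ratio_base ha h1
    push_neg at h1
    have ha' : 0 < a - 1 := by linarith
    have han' : a - 1 ≤ n + 1 := by push_cast at han ⊢; linarith
    have hfac : Tendsto (fun x : ℝ => (x + (a - 1)) / x) atTop (nhds 1) := by
      have h1' : Tendsto (fun x : ℝ => 1 + (a - 1) / x) atTop (nhds 1) := by
        simpa using (tendsto_const_nhds (x := (1:ℝ))).add
          (Tendsto.div_atTop (tendsto_const_nhds (x := a - 1)) tendsto_id)
      refine h1'.congr' ?_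
      filter_upwards [eventually_gt_atTop (0:ℝ)] with x hx
      field_simp
    have hmul := hfac.mul (ih (a - 1) ha' han')
    rw [mul_one] at hmul
    refine hmul.congr' ?_
    filter_upwards [eventually_gt_atTop (1:ℝ)] with x hx
    have hx0 : (0:ℝ) < x := by linarith
    have hΓx : 0 < Real.Gamma x := Real.Gamma_pos_of_pos hx0
    have hrw : Real.Gamma (x + a) = (x + (a - 1)) * Real.Gamma (x + (a - 1)) := by
      rw [show x + a = (x + (a - 1)) + 1 from by ring, Real.Gamma_add_one (by nlinarith)]
    have hrw2 : x ^ a = x ^ (a - 1) * x := by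
      rw [show a = (a - 1) + 1 from by ring, Real.rpow_add_one hx0.ne']
      ring_nf
    rw [hrw, hrw2]
    have hp : (0:ℝ) < x ^ (a - 1) := Real.rpow_pos_of_pos hx0 _
    field_simp

private lemma tendsto_gamma_ratio {a : ℝ} (ha : 0 < a) :
    Tendsto (fun x : ℝ => Real.Gamma (x + a) / (Real.Gamma x * x ^ a)) atTop (nhds 1) := by
  obtain ⟨n, hn⟩ := exists_nat_ge a
  exact tendsto_gamma_ratio_aux n a ha (by push_cast; linarith)

private lemma tendsto_pow_factor {s : ℝ} (hs : 0 < s) :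
    Tendsto (fun n : ℕ => (1 - s / n) ^ (((n:ℝ) - 2) / 2 - 1)) atTop
      (nhds (Real.exp (-s / 2))) := by
  have hnat : Tendsto (fun n : ℕ => (n:ℝ)) atTop atTop := tendsto_natCast_atTop_atTop
  have h1 : Tendsto (fun n : ℕ => (n:ℝ) * Real.log (1 + (-s) / n)) atTop (nhds (-s)) :=
    (Real.tendsto_mul_log_one_add_div_atTop (-s)).comp hnat
  have h2 : Tendsto (fun n : ℕ => ((n:ℝ) - 4) / (2 * n)) atTop (nhds (1 / 2)) := by
    have h2' : Tendsto (fun n : ℕ => (1 - 4 / (n:ℝ)) / 2) atTop (nhds ((1 - 0) / 2)) :=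
      ((tendsto_const_nhds.sub (Tendsto.div_atTop tendsto_const_nhds hnat)).div_const 2)
    rw [show ((1:ℝ) - 0) / 2 = 1 / 2 by norm_num] at h2'
    refine h2'.congr' ?_
    filter_upwards [eventually_ge_atTop 1] with n hn
    have hne : (n:ℝ) ≠ 0 := by positivity
    have h4 : 1 - 4 / (n:ℝ) = ((n:ℝ) - 4) / n := by field_simp
    rw [h4, div_div, mul_comm]
  have h3 : Tendsto (fun n : ℕ =>
      Real.exp (((n:ℝ) - 4) / (2 * n) * ((n:ℝ) * Real.log (1 + (-s) / n)))) atTop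
      (nhds (Real.exp (1 / 2 * (-s)))) := (Real.continuous_exp.tendsto _).comp (h2.mul h1)
  rw [show (1:ℝ) / 2 * (-s) = -s / 2 by ring] at h3
  refine h3.congr' ?_
  filter_upwards [hnat.eventually (eventually_gt_atTop s), eventually_ge_atTop 1] with n hn hn1
  have hn0 : (0:ℝ) < n := by positivity
  have hbase : (0:ℝ) < 1 - s / n := by
    rw [sub_pos, div_lt_one hn0]; exact hn
  rw [Real.rpow_def_of_pos hbase]
  congr 1
  rw [show (1:ℝ) + (-s) / n = 1 - s / n by ring]
  field_simp
  ring

private lemma tendsto_c_factor {a : ℝ} (ha : 0 < a) :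
    Tendsto (fun n : ℕ => Real.Gamma (a + ((n:ℝ) - 2) / 2)
        / (Real.Gamma a * Real.Gamma (((n:ℝ) - 2) / 2)) / (n:ℝ) ^ a) atTop
      (nhds ((1 / 2 : ℝ) ^ a / Real.Gamma a)) := by
  have hnat : Tendsto (fun n : ℕ => (n:ℝ)) atTop atTop := tendsto_natCast_atTop_atTop
  have hb : Tendsto (fun n : ℕ => ((n:ℝ) - 2) / 2) atTop atTop := by
    have := (tendsto_atTop_add_const_right atTop (-2 : ℝ) hnat).atTop_div_const
      (by norm_num : (0:ℝ) < 2)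
    simpa [sub_eq_add_neg] using this
  have h1 := (tendsto_gamma_ratio ha).comp hb
  have h2 : Tendsto (fun n : ℕ => (((n:ℝ) - 2) / 2) / n) atTop (nhds (1 / 2)) := by
    have h2' : Tendsto (fun n : ℕ => (1 - 2 / (n:ℝ)) / 2) atTop (nhds ((1 - 0) / 2)) :=
      ((tendsto_const_nhds.sub (Tendsto.div_atTop tendsto_const_nhds hnat)).div_const 2)
    rw [show ((1:ℝ) - 0) / 2 = 1 / 2 by norm_num] at h2'
    refine h2'.congr' ?_
    filter_upwards [eventually_ge_atTop 1] with n hn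
    have hne : (n:ℝ) ≠ 0 := by positivity
    have h4 : 1 - 2 / (n:ℝ) = ((n:ℝ) - 2) / n := by field_simp
    rw [h4, div_div, mul_comm, ← div_div]
  have h3 : Tendsto (fun n : ℕ => ((((n:ℝ) - 2) / 2) / n) ^ a) atTop
      (nhds ((1 / 2 : ℝ) ^ a)) := by
    have hc := (Real.continuousAt_rpow_const (1 / 2) a (Or.inl (by norm_num))).tendsto
    exact hc.comp h2
  have h4 := (h1.mul h3).div_const (Real.Gamma a)
  rw [one_mul] at h4
  refine h4.congr' ?_
  filter_upwards [eventually_ge_atTop 3] with n hn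
  have hn0 : (0:ℝ) < n := by positivity
  have hbn : (0:ℝ) < ((n:ℝ) - 2) / 2 := by
    have : (3:ℝ) ≤ n := by exact_mod_cast hn
    linarith
  have hΓb : 0 < Real.Gamma (((n:ℝ) - 2) / 2) := Real.Gamma_pos_of_pos hbn
  have hΓa : 0 < Real.Gamma a := Real.Gamma_pos_of_pos ha
  have hbpow : (0:ℝ) < (((n:ℝ) - 2) / 2) ^ a := Real.rpow_pos_of_pos hbn _
  have hnpow : (0:ℝ) < (n:ℝ) ^ a := Real.rpow_pos_of_pos hn0 _
  simp only [Function.comp_apply]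
  rw [Real.div_rpow hbn.le hn0.le, add_comm (((n:ℝ) - 2) / 2) a]
  field_simp

end AuxGamma

/-- The Beta(a, b) distribution on `ℝ`, as the measure on `(0,1)` with density
`t^(a−1)(1−t)^(b−1) / B(a,b)` with respect to Lebesgue measure. -/
noncomputable def betaMeasure (a b : ℝ) : Measure ℝ :=
  volume.withDensity fun t =>
    ENNReal.ofReal
      (Set.indicator (Set.Ioo (0 : ℝ) 1)
        (fun t => t ^ (a - 1) * (1 - t) ^ (b - 1) /
          (Real.Gamma a * Real.Gamma b / Real.Gamma (a + b))) t)

/-- The CDF of the Beta(a, b) distribution. -/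
noncomputable def betaCDF (a b x : ℝ) : ℝ := (_root_.betaMeasure a b (Set.Iic x)).toReal

/-- The CDF of the chi-squared distribution with `k` degrees of freedom, i.e. of the
Gamma distribution with shape `k/2` and rate `1/2` (scale `2`). -/
noncomputable def chiSqCDF (k x : ℝ) : ℝ := (gammaMeasure (k / 2) (1 / 2) (Set.Iic x)).toReal

section AuxCDF

open Filter Set

private lemma betaCDF_eq_integral {a b y : ℝ} (ha : 0 < a) (hb : 0 < b)
    (hy0 : 0 < y) (hy1 : y < 1) :
    betaCDF a b y = ∫ t in Ioo (0:ℝ) y, t ^ (a - 1) * (1 - t) ^ (b - 1) /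
      (Real.Gamma a * Real.Gamma b / Real.Gamma (a + b)) := by
  set g : ℝ → ℝ := fun t => t ^ (a - 1) * (1 - t) ^ (b - 1) /
      (Real.Gamma a * Real.Gamma b / Real.Gamma (a + b)) with hg
  have hB : 0 < Real.Gamma a * Real.Gamma b / Real.Gamma (a + b) := by
    have := Real.Gamma_pos_of_pos ha
    have := Real.Gamma_pos_of_pos hb
    have := Real.Gamma_pos_of_pos (by linarith : 0 < a + b)
    positivity
  rw [betaCDF, _root_.betaMeasure, withDensity_apply _ measurableSet_Iic]
  have hind : (fun t => ENNReal.ofReal ((Ioo (0:ℝ) 1).indicator g t))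
      = (Ioo (0:ℝ) 1).indicator (fun t => ENNReal.ofReal (g t)) := by
    funext t
    by_cases h : t ∈ Ioo (0:ℝ) 1 <;> simp [h]
  rw [hind, lintegral_indicator measurableSet_Ioo, Measure.restrict_restrict measurableSet_Ioo]
  have hset : Ioo (0:ℝ) 1 ∩ Iic y = Ioc (0:ℝ) y := by
    ext t
    simp only [mem_inter_iff, mem_Ioo, mem_Iic, mem_Ioc]
    constructor
    · rintro ⟨⟨h1, h2⟩, h3⟩; exact ⟨h1, h3⟩
    · rintro ⟨h1, h3⟩; exact ⟨⟨h1, by linarith⟩, h3⟩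
  rw [hset]
  have hnn : 0 ≤ᵐ[volume.restrict (Ioc (0:ℝ) y)] g := by
    rw [EventuallyLE, ae_restrict_iff' measurableSet_Ioc]
    refine ae_of_all _ fun t ht => ?_
    obtain ⟨ht0, hty⟩ := ht
    have h1t : 0 < 1 - t := by linarith
    simp only [Pi.zero_apply, hg]
    positivity
  have hmeas : AEStronglyMeasurable g (volume.restrict (Ioc (0:ℝ) y)) := by
    apply Measurable.aestronglyMeasurable; fun_prop
  rw [← integral_eq_lintegral_of_nonneg_ae hnn hmeas, integral_Ioc_eq_integral_Ioo]

end AuxCDF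

/-- For fixed `a > 0` and `x > 0`, the rescaled Beta CDF converges to the
chi-squared CDF with `2a` degrees of freedom:
`F_{Beta(a,(n−2)/2)}(x/n) → F_{χ²_{2a}}(x)` as `n → ∞`. -/
theorem betaCDF_tendsto_chiSqCDF (a x : ℝ) (ha : 0 < a) (hx : 0 < x) :
    Filter.Tendsto (fun n : ℕ => betaCDF a (((n : ℝ) - 2) / 2) (x / n))
      Filter.atTop (nhds (chiSqCDF (2 * a) x)) := by
  classical
  open Filter Set in
  have hΓa : 0 < Real.Gamma a := Real.Gamma_pos_of_pos ha
  set L : ℝ := (1/2 : ℝ) ^ a / Real.Gamma a with hL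
  set f : ℝ → ℝ := fun s => (1/2 : ℝ) ^ a / Real.Gamma a * s ^ (a-1) * Real.exp (-(1/2 * s))
    with hf
  set c : ℕ → ℝ := fun n => Real.Gamma (a + ((n:ℝ) - 2) / 2)
      / (Real.Gamma a * Real.Gamma (((n:ℝ) - 2) / 2)) / (n:ℝ) ^ a with hc
  set F : ℕ → ℝ → ℝ := fun n s => s ^ (a-1) * (1 - s / n) ^ (((n:ℝ) - 2) / 2 - 1) * c n with hF
  have hcl : Filter.Tendsto c Filter.atTop (nhds L) := tendsto_c_factor ha
  -- the chi-squared CDF as an integral over (0, x)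
  have hII : chiSqCDF (2*a) x = ∫ s in Set.Ioo (0:ℝ) x, f s := by
    rw [chiSqCDF, show 2*a/2 = a from by ring, gammaMeasure,
      withDensity_apply _ measurableSet_Iic,
      lintegral_Iic_eq_lintegral_Iio_add_Icc _ hx.le,
      ProbabilityTheory.lintegral_gammaPDF_of_nonpos le_rfl, zero_add,
      ← setLIntegral_congr (MeasureTheory.Ioo_ae_eq_Icc)]
    have heq : ∀ s ∈ Set.Ioo (0:ℝ) x, gammaPDF a (1/2) s = ENNReal.ofReal (f s) := by
      intro s hs
      rw [gammaPDF_of_nonneg hs.1.le, hf]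
    rw [setLIntegral_congr_fun measurableSet_Ioo heq]
    have hnn : 0 ≤ᵐ[volume.restrict (Set.Ioo (0:ℝ) x)] f := by
      rw [Filter.EventuallyLE, ae_restrict_iff' measurableSet_Ioo]
      refine MeasureTheory.ae_of_all _ fun s hs => ?_
      have hs0 := hs.1
      simp only [Pi.zero_apply, hf]
      positivity
    have hmeasf : AEStronglyMeasurable f (volume.restrict (Set.Ioo (0:ℝ) x)) := by
      apply Measurable.aestronglyMeasurable
      simp only [hf]; fun_prop
    rw [← integral_eq_lintegral_of_nonneg_ae hnn hmeasf]
  -- the beta CDF as an integral over (0, x), eventually in n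
  have hI : ∀ᶠ n : ℕ in Filter.atTop,
      betaCDF a (((n:ℝ) - 2) / 2) (x / n) = ∫ s in Set.Ioo (0:ℝ) x, F n s := by
    filter_upwards [Filter.eventually_ge_atTop 4,
      tendsto_natCast_atTop_atTop.eventually (Filter.eventually_gt_atTop x)] with n hn4 hnx
    have hn0 : (0:ℝ) < n := lt_trans hx hnx
    have hn4' : (4:ℝ) ≤ n := by exact_mod_cast hn4
    have hb : 0 < ((n:ℝ) - 2) / 2 := by linarith
    have hy0 : 0 < x / n := by positivity
    have hy1 : x / n < 1 := (div_lt_one hn0).mpr hnx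
    have hΓb : 0 < Real.Gamma (((n:ℝ) - 2) / 2) := Real.Gamma_pos_of_pos hb
    have hΓab : 0 < Real.Gamma (a + ((n:ℝ) - 2) / 2) := Real.Gamma_pos_of_pos (by linarith)
    rw [betaCDF_eq_integral ha hb hy0 hy1]
    set g : ℝ → ℝ := fun t => t ^ (a - 1) * (1 - t) ^ (((n:ℝ) - 2) / 2 - 1) /
      (Real.Gamma a * Real.Gamma (((n:ℝ) - 2) / 2) / Real.Gamma (a + ((n:ℝ) - 2) / 2))
      with hgdef
    have h5 : ∫ s in (0:ℝ)..x, g (s / n) = (n:ℝ) • ∫ t in (0:ℝ)/(n:ℝ)..x/(n:ℝ), g t :=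
      intervalIntegral.integral_comp_div (f := g) hn0.ne'
    rw [zero_div] at h5
    have h6 : ∫ t in Set.Ioo (0:ℝ) (x / n), g t
        = (n:ℝ)⁻¹ * ∫ s in Set.Ioo (0:ℝ) x, g (s / n) := by
      rw [← integral_Ioc_eq_integral_Ioo, ← intervalIntegral.integral_of_le hy0.le,
        ← integral_Ioc_eq_integral_Ioo (f := fun s => g (s / n)),
        ← intervalIntegral.integral_of_le hx.le, h5, smul_eq_mul, ← mul_assoc,
        inv_mul_cancel₀ hn0.ne', one_mul]
    rw [h6, ← integral_const_mul]
    apply setIntegral_congr_fun measurableSet_Ioo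
    intro s hs
    obtain ⟨hs0, hsx⟩ := hs
    simp only [hgdef, hF, hc]
    rw [Real.div_rpow hs0.le hn0.le]
    have hnp : (0:ℝ) < (n:ℝ) ^ (a - 1) := Real.rpow_pos_of_pos hn0 _
    have hna : ((n:ℝ)) ^ a = (n:ℝ) ^ (a - 1) * n := by
      rw [← Real.rpow_add_one hn0.ne' (a - 1), sub_add_cancel]
    rw [hna]
    have halg : ∀ A w Ga Gb Gab np nn : ℝ, Ga ≠ 0 → Gb ≠ 0 → np ≠ 0 → nn ≠ 0 →
        nn⁻¹ * (A / np * w / (Ga * Gb / Gab)) = A * w * (Gab / (Ga * Gb) / (np * nn)) := by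
      intro A w Ga Gb Gab np nn h1 h2 h3 h4
      field_simp
    exact halg _ _ _ _ _ _ _ hΓa.ne' hΓb.ne' hnp.ne' hn0.ne' 
  -- dominated convergence
  have hmeasF : ∀ n : ℕ, AEStronglyMeasurable (F n) (volume.restrict (Set.Ioo (0:ℝ) x)) := by
    intro n
    apply Measurable.aestronglyMeasurable
    simp only [hF]
    fun_prop
  have hboundint : IntegrableOn (fun s : ℝ => s ^ (a - 1) * (L + 1)) (Set.Ioo (0:ℝ) x) := by
    have h : IntervalIntegrable (fun s : ℝ => s ^ (a - 1)) volume 0 x :=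
      intervalIntegral.intervalIntegrable_rpow' (by linarith)
    rw [intervalIntegrable_iff_integrableOn_Ioo_of_le hx.le] at h
    exact h.mul_const _
  have hbound : ∀ᶠ n : ℕ in Filter.atTop, ∀ᵐ s ∂(volume.restrict (Set.Ioo (0:ℝ) x)),
      ‖F n s‖ ≤ s ^ (a - 1) * (L + 1) := by
    filter_upwards [Filter.eventually_ge_atTop 4,
      tendsto_natCast_atTop_atTop.eventually (Filter.eventually_gt_atTop x),
      hcl.eventually (eventually_le_nhds (lt_add_one L))] with n hn4 hnx hcle
    rw [ae_restrict_iff' measurableSet_Ioo]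
    refine MeasureTheory.ae_of_all _ fun s hs => ?_
    obtain ⟨hs0, hsx⟩ := hs
    have hn0 : (0:ℝ) < n := lt_trans hx hnx
    have hn4' : (4:ℝ) ≤ n := by exact_mod_cast hn4
    have hbase0 : (0:ℝ) ≤ 1 - s / n := by
      have : s / n < 1 := (div_lt_one hn0).mpr (lt_trans hsx hnx)
      linarith
    have hbase1 : 1 - s / n ≤ 1 := by
      have : 0 ≤ s / n := by positivity
      linarith
    have hexp : (0:ℝ) ≤ ((n:ℝ) - 2) / 2 - 1 := by linarith
    have hw1 : (1 - s / n) ^ (((n:ℝ) - 2) / 2 - 1) ≤ 1 := Real.rpow_le_one hbase0 hbase1 hexp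
    have hw0 : (0:ℝ) ≤ (1 - s / n) ^ (((n:ℝ) - 2) / 2 - 1) := Real.rpow_nonneg hbase0 _
    have hc0 : 0 ≤ c n := by
      have hb : 0 < ((n:ℝ) - 2) / 2 := by linarith
      have h1 := Real.Gamma_pos_of_pos hb
      have h2 := Real.Gamma_pos_of_pos (by linarith : 0 < a + ((n:ℝ) - 2) / 2)
      have h3 : (0:ℝ) < (n:ℝ) ^ a := Real.rpow_pos_of_pos hn0 _
      simp only [hc]
      positivity
    have hsp : (0:ℝ) ≤ s ^ (a - 1) := Real.rpow_nonneg hs0.le _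
    have hFnn : 0 ≤ F n s := by
      simp only [hF]
      exact mul_nonneg (mul_nonneg hsp hw0) hc0
    have h1 : (1 - s / n) ^ (((n:ℝ) - 2) / 2 - 1) * c n ≤ L + 1 := by
      have := mul_le_mul hw1 hcle hc0 zero_le_one
      simpa using this
    have h2 : F n s ≤ s ^ (a - 1) * (L + 1) := by
      simp only [hF, mul_assoc]
      exact mul_le_mul_of_nonneg_left h1 hsp
    rw [Real.norm_eq_abs, abs_of_nonneg hFnn]
    exact h2
  have hlim : ∀ᵐ s ∂(volume.restrict (Set.Ioo (0:ℝ) x)),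
      Filter.Tendsto (fun n => F n s) Filter.atTop (nhds (f s)) := by
    filter_upwards [ae_restrict_mem measurableSet_Ioo] with s hs
    have hs0 := hs.1
    have ht := ((tendsto_const_nhds (x := s ^ (a - 1))).mul (tendsto_pow_factor hs0)).mul hcl
    have hfs : f s = s ^ (a - 1) * Real.exp (-s / 2) * L := by
      simp only [hf, hL]
      rw [show -(1/2 * s) = -s / 2 from by ring]
      ring
    rw [hfs]
    exact ht
  have hDCT := MeasureTheory.tendsto_integral_filter_of_dominated_convergence _
    (Filter.Eventually.of_forall hmeasF) hbound hboundint hlim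
  rw [hII]
  exact hDCT.congr' (by filter_upwards [hI] with n h using h.symm)
end
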